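/- For every real β ≥ 1 and every integer k ≥ 0: (i) γ(2k+2, β) > γ(2k, β); (ii) γ(2k+1, β) > γ(2k, β); (iii) γ(2k, β) > γ(2k−1, β) if and only if β < 1 + 2/(H(2k+2) − 1); (iv) γ(2k+1, β) > γ(2k−1, β) if and only if β < 1 + 2/(P(2k+2) − 1). -/
import Mathlib


/-- Pell numbers: P 0 = 0, P 1 = 1, P (m+2) = 2·P (m+1) + P m. -/
def pell : ℕ → ℕ
  | 0 => 0
  | 1 => 1
  | m + 2 => 2 * pell (m + 1) + pell m

/-- Half-companion Pell numbers: H 0 = 1, H 1 = 1, H (m+2) = 2·H (m+1) + H m. -/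
def hpell : ℕ → ℕ
  | 0 => 1
  | 1 => 1
  | m + 2 => 2 * hpell (m + 1) + hpell m

/-- For m ≥ -1, γ(m, β): for even m = 2k, γ = H(2k+2)/((β+1)·P(2k+1)); for odd
m = 2k−1, γ = 2·P(2k+1)/((β+1)·H(2k) − (β−1)).  (In particular γ(−1, β) = 1.) -/
noncomputable def gam (m : ℤ) (β : ℝ) : ℝ :=
  if m % 2 = 0 then
    (hpell (m + 2).toNat : ℝ) / ((β + 1) * (pell (m + 1).toNat : ℝ))
  else
    2 * (pell (m + 2).toNat : ℝ) / ((β + 1) * (hpell (m + 1).toNat : ℝ) - (β - 1))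

lemma pell_add_two (n : ℕ) : pell (n+2) = 2 * pell (n+1) + pell n := rfl
lemma hpell_add_two (n : ℕ) : hpell (n+2) = 2 * hpell (n+1) + hpell n := rfl

lemma pell_one_le (n : ℕ) : 1 ≤ pell (n+1) := by
  induction n with
  | zero => decide
  | succ n ih => rw [pell_add_two]; omega

lemma hpell_one_le (n : ℕ) : 1 ≤ hpell n := by
  induction n using Nat.twoStepInduction with
  | zero => decide
  | one => decide
  | more n ih1 ih2 => rw [hpell_add_two]; omega

lemma hp_eq (n : ℕ) : (hpell (n+1) : ℤ) = pell (n+1) + pell n := by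
  induction n using Nat.twoStepInduction with
  | zero => decide
  | one => decide
  | more n ih1 ih2 =>
    have ih2' : (hpell (n+2) : ℤ) = pell (n+2) + pell (n+1) := ih2
    show (hpell (n+3) : ℤ) = pell (n+3) + pell (n+2)
    have e1 : hpell (n+3) = 2*hpell (n+2) + hpell (n+1) := rfl
    have e2 : pell (n+3) = 2*pell (n+2) + pell (n+1) := rfl
    have e3 : (pell (n+2) : ℤ) = 2*pell (n+1) + pell n := by
      rw [pell_add_two]; push_cast; ring
    rw [e1, e2]
    push_cast
    linarith [ih1, ih2', e3]

lemma key (k : ℕ) : ((pell (2*k+1) : ℤ))^2 + 2*(pell (2*k+2):ℤ)*(pell (2*k+1):ℤ)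
    - ((pell (2*k+2):ℤ))^2 = 1 := by
  induction k with
  | zero => decide
  | succ k ih =>
    have e1 : 2*(k+1)+1 = 2*k+1+2 := by ring
    have e2 : 2*(k+1)+2 = 2*k+2+2 := by ring
    rw [e1, e2, pell_add_two (2*k+2), show 2*k+2+1 = 2*k+1+2 from rfl, pell_add_two (2*k+1)]
    push_cast
    push_cast at ih
    linear_combination ih

lemma zP3 (k : ℕ) : (pell (2*k+3) : ℤ) = 2*pell (2*k+2) + pell (2*k+1) := by
  have : pell (2*k+3) = 2*pell (2*k+2) + pell (2*k+1) := pell_add_two (2*k+1)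
  rw [this]; push_cast; ring

lemma zP2 (k : ℕ) : (pell (2*k+2) : ℤ) = 2*pell (2*k+1) + pell (2*k) := by
  rw [pell_add_two (2*k)]; push_cast; ring

lemma zH2 (k : ℕ) : (hpell (2*k+2) : ℤ) = pell (2*k+2) + pell (2*k+1) := hp_eq (2*k+1)

lemma zH0 (k : ℕ) : (hpell (2*k) : ℤ) = 3*pell (2*k+1) - pell (2*k+2) := by
  have a := hp_eq (2*k)
  have b : (hpell (2*k+2) : ℤ) = 2*hpell (2*k+1) + hpell (2*k) := by
    rw [hpell_add_two (2*k)]; push_cast; ring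
  have c := zH2 k
  have d := zP2 k
  linarith

lemma zH4 (k : ℕ) : (hpell (2*k+4) : ℤ) = 7*pell (2*k+2) + 3*pell (2*k+1) := by
  have a : (hpell (2*k+4) : ℤ) = pell (2*k+4) + pell (2*k+3) := hp_eq (2*k+3)
  have b : (pell (2*k+4) : ℤ) = 2*pell (2*k+3) + pell (2*k+2) := by
    rw [pell_add_two (2*k+2)]; push_cast; ring
  have c := zP3 k
  linarith

lemma gam_even (k : ℕ) (β : ℝ) :
    gam (2*(k:ℤ)) β = (hpell (2*k+2) : ℝ) / ((β+1) * (pell (2*k+1) : ℝ)) := by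
  have h1 : (2*(k:ℤ)) % 2 = 0 := by omega
  have h2 : ((2*(k:ℤ)) + 2).toNat = 2*k+2 := by omega
  have h3 : ((2*(k:ℤ)) + 1).toNat = 2*k+1 := by omega
  rw [gam, if_pos h1, h2, h3]

lemma gam_even2 (k : ℕ) (β : ℝ) :
    gam (2*(k:ℤ)+2) β = (hpell (2*k+4) : ℝ) / ((β+1) * (pell (2*k+3) : ℝ)) := by
  have h1 : (2*(k:ℤ)+2) % 2 = 0 := by omega
  have h2 : ((2*(k:ℤ)+2) + 2).toNat = 2*k+4 := by omega
  have h3 : ((2*(k:ℤ)+2) + 1).toNat = 2*k+3 := by omega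
  rw [gam, if_pos h1, h2, h3]

lemma gam_odd (k : ℕ) (β : ℝ) :
    gam (2*(k:ℤ)+1) β = 2 * (pell (2*k+3) : ℝ) / ((β+1) * (hpell (2*k+2) : ℝ) - (β-1)) := by
  have h1 : ¬ (2*(k:ℤ)+1) % 2 = 0 := by omega
  have h2 : ((2*(k:ℤ)+1) + 2).toNat = 2*k+3 := by omega
  have h3 : ((2*(k:ℤ)+1) + 1).toNat = 2*k+2 := by omega
  rw [gam, if_neg h1, h2, h3]

lemma gam_odd_sub (k : ℕ) (β : ℝ) :
    gam (2*(k:ℤ)-1) β = 2 * (pell (2*k+1) : ℝ) / ((β+1) * (hpell (2*k) : ℝ) - (β-1)) := by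
  have h1 : ¬ (2*(k:ℤ)-1) % 2 = 0 := by omega
  have h2 : ((2*(k:ℤ)-1) + 2).toNat = 2*k+1 := by omega
  have h3 : ((2*(k:ℤ)-1) + 1).toNat = 2*k := by omega
  rw [gam, if_neg h1, h2, h3]

theorem stmt_3 (β : ℝ) (hβ : 1 ≤ β) (k : ℕ) :
    gam (2*(k:ℤ)+2) β > gam (2*(k:ℤ)) β ∧
    gam (2*(k:ℤ)+1) β > gam (2*(k:ℤ)) β ∧
    (gam (2*(k:ℤ)) β > gam (2*(k:ℤ)-1) β ↔ β < 1 + 2 / ((hpell (2*k+2) : ℝ) - 1)) ∧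
    (gam (2*(k:ℤ)+1) β > gam (2*(k:ℤ)-1) β ↔ β < 1 + 2 / ((pell (2*k+2) : ℝ) - 1)) := by
  set X : ℝ := (pell (2*k+2) : ℝ) with hXdef
  set Y : ℝ := (pell (2*k+1) : ℝ) with hYdef
  have hY : 1 ≤ Y := by
    rw [hYdef]; exact_mod_cast pell_one_le (2*k)
  have hX : 2 ≤ X := by
    have h1 := pell_one_le (2*k)
    have h2 : 2 ≤ pell (2*k+2) := by rw [pell_add_two]; omega
    rw [hXdef]; exact_mod_cast h2
  have hP3 : (pell (2*k+3) : ℝ) = 2*X + Y := by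
    rw [hXdef, hYdef]; exact_mod_cast zP3 k
  have hH2 : (hpell (2*k+2) : ℝ) = X + Y := by
    rw [hXdef, hYdef]; exact_mod_cast zH2 k
  have hH0 : (hpell (2*k) : ℝ) = 3*Y - X := by
    rw [hXdef, hYdef]; exact_mod_cast zH0 k
  have hH4 : (hpell (2*k+4) : ℝ) = 7*X + 3*Y := by
    rw [hXdef, hYdef]; exact_mod_cast zH4 k
  have hKey : Y^2 + 2*X*Y - X^2 = 1 := by
    rw [hXdef, hYdef]; exact_mod_cast key k
  have hH0ge : (1:ℝ) ≤ 3*Y - X := by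
    rw [← hH0]; exact_mod_cast hpell_one_le (2*k)
  have hβ1 : (0:ℝ) < β + 1 := by linarith
  have d0 : 0 < (β+1) * Y := mul_pos hβ1 (by linarith)
  have d2 : 0 < (β+1) * (2*X + Y) := mul_pos hβ1 (by linarith)
  have dD1 : 0 < (β+1) * (X + Y) - (β-1) := by
    nlinarith [mul_nonneg (le_of_lt hβ1) (show (0:ℝ) ≤ X + Y - 1 by linarith)]
  have dD2 : 0 < (β+1) * (3*Y - X) - (β-1) := by
    nlinarith [mul_nonneg (le_of_lt hβ1) (show (0:ℝ) ≤ (3*Y - X) - 1 by linarith)]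
  refine ⟨?_, ?_, ?_, ?_⟩
  · rw [gam_even2, gam_even, hH2, hH4, hP3, gt_iff_lt, div_lt_div_iff₀ d0 d2]
    have e : (7*X+3*Y) * ((β+1)*Y) - (X+Y) * ((β+1)*(2*X+Y)) = 2*(β+1) := by
      linear_combination (2*(β+1)) * hKey
    linarith
  · rw [gam_odd, gam_even, hH2, hP3, gt_iff_lt, div_lt_div_iff₀ d0 dD1]
    have e : 2*(2*X+Y) * ((β+1)*Y) - (X+Y) * ((β+1)*(X+Y) - (β-1))
        = (β+1) + (β-1)*(X+Y) := by
      linear_combination (β+1) * hKey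
    nlinarith [mul_nonneg (show (0:ℝ) ≤ β - 1 by linarith) (show (0:ℝ) ≤ X + Y by linarith)]
  · rw [gam_even, gam_odd_sub, hH2, hH0, gt_iff_lt, div_lt_div_iff₀ dD2 d0,
      ← sub_lt_iff_lt_add', lt_div_iff₀ (show (0:ℝ) < X + Y - 1 by linarith)]
    have e : (X+Y) * ((β+1)*(3*Y-X) - (β-1)) - 2*Y * ((β+1)*Y)
        = (β+1) - (β-1)*(X+Y) := by
      linear_combination (β+1) * hKey
    have hexp : (β-1)*(X+Y-1) = (β-1)*(X+Y) - (β-1) := by ring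
    constructor <;> intro h <;> linarith
  · rw [gam_odd, gam_odd_sub, hH2, hH0, hP3, gt_iff_lt, div_lt_div_iff₀ dD2 dD1,
      ← sub_lt_iff_lt_add', lt_div_iff₀ (show (0:ℝ) < X - 1 by linarith)]
    have e : 2*(2*X+Y) * ((β+1)*(3*Y-X) - (β-1)) - 2*Y * ((β+1)*(X+Y) - (β-1))
        = 4*(β+1) - 4*X*(β-1) := by
      linear_combination (4*(β+1)) * hKey
    have hexp : (β-1)*(X-1) = (β-1)*X - (β-1) := by ring
    constructor <;> intro h <;> nlinarith
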